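/- arXiv:2604.11434 — 3 statements merged into one kernel-verified Lean document; each statement's English description precedes it below -/
import Mathlib

section
/- If (L_t)_{t≥0} is a Lévy process with E[exp(L_1)] = 1, then the measure μ(dx) = exp(-x) dx on ℝ is invariant for the Markov family x ↦ L_t + x, i.e. for every Borel set B and every t ≥ 0, ∫_ℝ P[L_t + x ∈ B] exp(-x) dx = ∫_B exp(-x) dx. -/
open MeasureTheory Filter Set

/-- A real-valued Lévy process: `L 0 = 0`, càdlàg paths, stationary increments,
and increments independent of the past. -/
structure IsLevy {Ω : Type*} [MeasurableSpace Ω] (P : Measure Ω) (L : ℝ → Ω → ℝ) : Prop where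
  meas : ∀ t : ℝ, Measurable (L t)
  zero : ∀ ω, L 0 ω = 0
  cadlag_right : ∀ ω, ∀ t ∈ Set.Ici (0:ℝ), ContinuousWithinAt (fun s => L s ω) (Set.Ici t) t
  cadlag_left : ∀ ω, ∀ t ∈ Set.Ioi (0:ℝ), ∃ l : ℝ,
    Filter.Tendsto (fun s => L s ω) (nhdsWithin t (Set.Iio t)) (nhds l)
  stat_inc : ∀ s t : ℝ, 0 ≤ s → s ≤ t →
    Measure.map (fun ω => L t ω - L s ω) P = Measure.map (L (t - s)) P
  indep_inc : ∀ s t : ℝ, 0 ≤ s → s ≤ t →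
    ProbabilityTheory.Indep (⨆ r ∈ Set.Icc (0:ℝ) s, MeasurableSpace.comap (L r) inferInstance)
      (MeasurableSpace.comap (fun ω => L t ω - L s ω) inferInstance) P

namespace LevyAux
open ProbabilityTheory
variable {Ω : Type*} [MeasurableSpace Ω] (P : Measure Ω) [IsProbabilityMeasure P]
  (L : ℝ → Ω → ℝ)

noncomputable def FF (u : ℝ) : ENNReal := ∫⁻ ω, ENNReal.ofReal (Real.exp (L u ω)) ∂P

variable {P L}

lemma mexp : Measurable fun x : ℝ => ENNReal.ofReal (Real.exp x) :=
  ENNReal.measurable_ofReal.comp Real.measurable_exp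

lemma FF_add (hL : IsLevy P L) {s t : ℝ} (hs : 0 ≤ s) (ht : 0 ≤ t) :
    FF P L (s + t) = FF P L s * FF P L t := by
  have hle : s ≤ s + t := le_add_of_nonneg_right ht
  have hind : IndepFun (L s) (fun ω => L (s + t) ω - L s ω) P := by
    have h := hL.indep_inc s (s + t) hs hle
    exact (IndepFun_iff_Indep _ _ _).mpr (indep_of_indep_of_le_left h
      (le_iSup₂ (f := fun r (_ : r ∈ Set.Icc (0:ℝ) s) =>
        MeasurableSpace.comap (L r) inferInstance) s ⟨hs, le_refl s⟩))
  have hindF : IndepFun (fun ω => ENNReal.ofReal (Real.exp (L s ω)))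
      (fun ω => ENNReal.ofReal (Real.exp (L (s + t) ω - L s ω))) P :=
    hind.comp mexp mexp
  have hDmeas : Measurable fun ω => L (s + t) ω - L s ω := (hL.meas _).sub (hL.meas _)
  calc FF P L (s + t)
      = ∫⁻ ω, ((fun ω => ENNReal.ofReal (Real.exp (L s ω))) *
          fun ω => ENNReal.ofReal (Real.exp (L (s + t) ω - L s ω))) ω ∂P := by
        unfold FF; congr 1; funext ω
        simp only [Pi.mul_apply]
        rw [← ENNReal.ofReal_mul (Real.exp_pos _).le, ← Real.exp_add]
        ring_nf
    _ = FF P L s * ∫⁻ ω, ENNReal.ofReal (Real.exp (L (s + t) ω - L s ω)) ∂P :=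
        lintegral_mul_eq_lintegral_mul_lintegral_of_indepFun
          (mexp.comp (hL.meas s)) (mexp.comp hDmeas) hindF
    _ = FF P L s * FF P L t := by
        congr 1
        rw [← lintegral_map mexp hDmeas, hL.stat_inc s (s + t) hs hle,
          add_sub_cancel_left, lintegral_map mexp (hL.meas t)]
        rfl

lemma FF_zero (hL : IsLevy P L) : FF P L 0 = 1 := by
  unfold FF
  simp [hL.zero, Real.exp_zero]

omit [IsProbabilityMeasure P] in
lemma FF_one (hL : IsLevy P L) (h1 : ∫ ω, Real.exp (L 1 ω) ∂P = 1) : FF P L 1 = 1 := by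
  have hInt : Integrable (fun ω => Real.exp (L 1 ω)) P := by
    by_contra h
    rw [integral_undef h] at h1
    norm_num at h1
  unfold FF
  rw [← ofReal_integral_eq_lintegral_ofReal hInt (ae_of_all _ fun ω => (Real.exp_pos _).le), h1,
    ENNReal.ofReal_one]

lemma FF_nsmul (hL : IsLevy P L) (u : ℝ) (hu : 0 ≤ u) :
    ∀ k : ℕ, FF P L (k * u) = FF P L u ^ k := by
  intro k
  induction k with
  | zero => simpa using FF_zero hL
  | succ n ih =>
      have h : ((n : ℝ) + 1) * u = n * u + u := by ring
      push_cast
      rw [h, FF_add hL (by positivity) hu, ih, pow_succ]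

lemma FF_nat_div (hL : IsLevy P L) (h1 : ∫ ω, Real.exp (L 1 ω) ∂P = 1)
    (k m : ℕ) (hm : 0 < m) : FF P L ((k : ℝ) / (m : ℝ)) = 1 := by
  have hmR : (0:ℝ) < m := by exact_mod_cast hm
  have hpow : FF P L (1 / (m : ℝ)) ^ m = 1 := by
    rw [← FF_nsmul hL _ (by positivity) m, show (m : ℝ) * (1 / (m : ℝ)) = 1 by field_simp]
    exact FF_one hL h1
  have h1m : FF P L (1 / (m : ℝ)) = 1 := (ENNReal.pow_right_strictMono hm.ne').injective (by simpa using hpow)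
  rw [show (k : ℝ) / (m : ℝ) = k * (1 / (m : ℝ)) by ring,
    FF_nsmul hL _ (by positivity) k, h1m, one_pow]

lemma FF_le_one (hL : IsLevy P L) (h1 : ∫ ω, Real.exp (L 1 ω) ∂P = 1)
    {t : ℝ} (ht : 0 ≤ t) : FF P L t ≤ 1 := by
  set q : ℕ → ℝ := fun n => (⌈t * ((n : ℝ) + 1)⌉₊ : ℝ) / ((n : ℝ) + 1) with hq
  have hpos : ∀ n : ℕ, (0:ℝ) < (n : ℝ) + 1 := fun n => by positivity
  have hq_ge : ∀ n, t ≤ q n := by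
    intro n
    rw [hq, le_div_iff₀ (hpos n)]
    exact Nat.le_ceil _
  have hq_le : ∀ n, q n ≤ t + 1 / ((n : ℝ) + 1) := by
    intro n
    rw [hq, div_le_iff₀ (hpos n)]
    have := (Nat.ceil_lt_add_one (by positivity : (0:ℝ) ≤ t * ((n:ℝ)+1))).le
    calc (⌈t * ((n : ℝ) + 1)⌉₊ : ℝ) ≤ t * ((n:ℝ)+1) + 1 := this
      _ = (t + 1 / ((n : ℝ) + 1)) * ((n : ℝ) + 1) := by field_simp
  have hq_tendsto : Tendsto q atTop (nhds t) := by
    have h2 : Tendsto (fun n : ℕ => t + 1 / ((n : ℝ) + 1)) atTop (nhds t) := by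
      have := tendsto_one_div_add_atTop_nhds_zero_nat (𝕜 := ℝ)
      simpa using tendsto_const_nhds.add this
    exact tendsto_of_tendsto_of_tendsto_of_le_of_le tendsto_const_nhds h2 hq_ge hq_le
  have hconv : ∀ ω, Tendsto (fun n => ENNReal.ofReal (Real.exp (L (q n) ω))) atTop
      (nhds (ENNReal.ofReal (Real.exp (L t ω)))) := by
    intro ω
    have hc : Tendsto (fun s => L s ω) (nhdsWithin t (Set.Ici t)) (nhds (L t ω)) :=
      hL.cadlag_right ω t ht
    have hqt : Tendsto q atTop (nhdsWithin t (Set.Ici t)) :=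
      tendsto_nhdsWithin_iff.mpr ⟨hq_tendsto, Eventually.of_forall fun n => hq_ge n⟩
    exact (ENNReal.continuous_ofReal.tendsto _).comp
      ((Real.continuous_exp.tendsto _).comp (hc.comp hqt))
  have hFq : ∀ n, FF P L (q n) = 1 := by
    intro n
    have : q n = ((⌈t * ((n : ℝ) + 1)⌉₊ : ℕ) : ℝ) / (((n + 1 : ℕ) : ℕ) : ℝ) := by
      rw [hq]; push_cast; ring
    rw [this]
    exact FF_nat_div hL h1 _ _ (Nat.succ_pos n)
  have key : FF P L t ≤ liminf (fun n => FF P L (q n)) atTop := by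
    have heq : FF P L t = ∫⁻ ω, liminf (fun n => ENNReal.ofReal (Real.exp (L (q n) ω))) atTop ∂P := by
      unfold FF; congr 1; funext ω
      exact ((hconv ω).liminf_eq).symm
    rw [heq]
    exact lintegral_liminf_le fun n => mexp.comp (hL.meas (q n))
  have : liminf (fun n => FF P L (q n)) atTop = 1 := by
    simp only [hFq]
    exact liminf_const 1
  rw [this] at key
  exact key

lemma FF_eq_one (hL : IsLevy P L) (h1 : ∫ ω, Real.exp (L 1 ω) ∂P = 1)
    {t : ℝ} (ht : 0 ≤ t) : FF P L t = 1 := by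
  set s : ℝ := ((⌈t⌉₊ + 1 : ℕ) : ℝ) with hs
  have hts : t ≤ s := by
    rw [hs]; push_cast
    have := Nat.le_ceil t
    linarith
  have hFs : FF P L s = 1 := by
    have : s = ((⌈t⌉₊ + 1 : ℕ) : ℝ) / ((1 : ℕ) : ℝ) := by rw [hs]; simp
    rw [this]; exact FF_nat_div hL h1 _ _ one_pos
  have hsplit : FF P L s = FF P L t * FF P L (s - t) := by
    have := FF_add hL ht (by linarith : (0:ℝ) ≤ s - t)
    rwa [add_sub_cancel] at this
  refine le_antisymm (FF_le_one hL h1 ht) ?_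
  calc (1:ENNReal) = FF P L t * FF P L (s - t) := by rw [← hsplit, hFs]
    _ ≤ FF P L t * 1 := mul_le_mul_right (FF_le_one hL h1 (by linarith)) _
    _ = FF P L t := mul_one _

end LevyAux
open LevyAux



/-- the measure `exp (-x) dx` is invariant for the Markov family
`x ↦ L t + x` of a Lévy process with `E[exp (L 1)] = 1`. -/
theorem exp_measure_invariant_for_levy {Ω : Type*} [MeasurableSpace Ω] (P : Measure Ω)
    [IsProbabilityMeasure P] (L : ℝ → Ω → ℝ) (hL : IsLevy P L)
    (h1 : ∫ ω, Real.exp (L 1 ω) ∂P = 1) :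
    ∀ t : ℝ, 0 ≤ t → ∀ B : Set ℝ, MeasurableSet B →
      ∫ x : ℝ, (P {ω | L t ω + x ∈ B}).toReal * Real.exp (-x)
        = ∫ x in B, Real.exp (-x) := by
  intro t ht B hB
  set c : ENNReal := ∫⁻ y in B, ENNReal.ofReal (Real.exp (-y)) with hc
  set K : ℝ → ENNReal := fun x => ∫⁻ ω, B.indicator (fun _ => (1:ENNReal)) (L t ω + x) ∂P with hK
  have hind_meas : Measurable (B.indicator (fun _ => (1:ENNReal))) :=
    measurable_const.indicator hB
  have hKmeas : Measurable K := by
    have hm : Measurable fun p : ℝ × Ω => B.indicator (fun _ => (1:ENNReal)) (L t p.2 + p.1) :=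
      hind_meas.comp (((hL.meas t).comp measurable_snd).add measurable_fst)
    exact hm.lintegral_prod_right'
  have hKP : ∀ x, P {ω | L t ω + x ∈ B} = K x := by
    intro x
    have hpre : MeasurableSet ((fun ω => L t ω + x) ⁻¹' B) :=
      ((hL.meas t).add_const x) hB
    rw [hK]
    have : P {ω | L t ω + x ∈ B} = P ((fun ω => L t ω + x) ⁻¹' B) := rfl
    rw [this, ← lintegral_indicator_one hpre]
    refine lintegral_congr fun a => ?_
    by_cases h : L t a + x ∈ B <;> simp [Set.indicator_apply, Set.mem_preimage, h]
  have hKle : ∀ x, K x ≤ 1 := by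
    intro x
    calc K x ≤ ∫⁻ _, (1:ENNReal) ∂P := lintegral_mono fun ω =>
          Set.indicator_apply_le' (fun _ => le_rfl) (fun _ => zero_le_one)
      _ = 1 := by simp
  have hKne : ∀ x, K x ≠ ⊤ := fun x => ((hKle x).trans_lt ENNReal.one_lt_top).ne
  -- rewrite both sides via lintegrals
  have hfun : (fun x => (P {ω | L t ω + x ∈ B}).toReal * Real.exp (-x))
      = fun x => (K x).toReal * Real.exp (-x) := funext fun x => by rw [hKP]
  rw [hfun]
  rw [integral_eq_lintegral_of_nonneg_ae
      (ae_of_all _ fun x => mul_nonneg ENNReal.toReal_nonneg (Real.exp_pos _).le)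
      ((hKmeas.ennreal_toReal.mul (Real.measurable_exp.comp measurable_neg)).aestronglyMeasurable),
    integral_eq_lintegral_of_nonneg_ae
      (ae_of_all _ fun x => (Real.exp_pos _).le)
      ((Real.measurable_exp.comp measurable_neg).aestronglyMeasurable)]
  congr 1
  -- Now an equality of lintegrals
  have hofReal : ∀ x : ℝ, ENNReal.ofReal ((K x).toReal * Real.exp (-x))
      = K x * ENNReal.ofReal (Real.exp (-x)) := by
    intro x
    rw [ENNReal.ofReal_mul ENNReal.toReal_nonneg, ENNReal.ofReal_toReal (hKne x)]
  calc ∫⁻ x, ENNReal.ofReal ((K x).toReal * Real.exp (-x))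
      = ∫⁻ x, K x * ENNReal.ofReal (Real.exp (-x)) := by
        congr 1; funext x; exact hofReal x
    _ = ∫⁻ x, ∫⁻ ω, B.indicator (fun _ => (1:ENNReal)) (L t ω + x)
          * ENNReal.ofReal (Real.exp (-x)) ∂P := by
        congr 1; funext x
        rw [hK]
        exact (lintegral_mul_const _ (hind_meas.comp ((hL.meas t).add_const x))).symm
    _ = ∫⁻ ω, ∫⁻ x, B.indicator (fun _ => (1:ENNReal)) (L t ω + x)
          * ENNReal.ofReal (Real.exp (-x)) ∂(volume) ∂P := by
        apply lintegral_lintegral_swap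
        apply Measurable.aemeasurable
        apply Measurable.mul
        · exact hind_meas.comp (((hL.meas t).comp measurable_snd).add measurable_fst)
        · exact (mexp.comp measurable_neg).comp measurable_fst
    _ = ∫⁻ ω, ENNReal.ofReal (Real.exp (L t ω)) * c ∂P := by
        congr 1; funext ω
        set c0 : ℝ := L t ω with hc0
        have key : ∀ x : ℝ, B.indicator (fun _ => (1:ENNReal)) (c0 + x)
            * ENNReal.ofReal (Real.exp (-x))
            = (fun y => B.indicator (fun _ => (1:ENNReal)) y
                * ENNReal.ofReal (Real.exp (c0 - y))) (x + c0) := by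
          intro x
          have h2 : c0 - (x + c0) = -x := by ring
          simp only [add_comm x c0, show c0 - (c0 + x) = -x from by ring]
        calc ∫⁻ x, B.indicator (fun _ => (1:ENNReal)) (c0 + x) * ENNReal.ofReal (Real.exp (-x))
            = ∫⁻ x, (fun y => B.indicator (fun _ => (1:ENNReal)) y
                * ENNReal.ofReal (Real.exp (c0 - y))) (x + c0) := by
              congr 1; funext x; exact key x
          _ = ∫⁻ y, B.indicator (fun _ => (1:ENNReal)) y * ENNReal.ofReal (Real.exp (c0 - y)) :=
              lintegral_add_right_eq_self (μ := volume) (fun y =>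
                B.indicator (fun _ => (1:ENNReal)) y * ENNReal.ofReal (Real.exp (c0 - y))) c0
          _ = ∫⁻ y, B.indicator (fun y => ENNReal.ofReal (Real.exp (c0 - y))) y := by
              congr 1; funext y
              by_cases h : y ∈ B <;> simp [Set.indicator_apply, h]
          _ = ∫⁻ y in B, ENNReal.ofReal (Real.exp (c0 - y)) := lintegral_indicator hB _
          _ = ∫⁻ y in B, ENNReal.ofReal (Real.exp c0) * ENNReal.ofReal (Real.exp (-y)) := by
              congr 1; funext y
              rw [← ENNReal.ofReal_mul (Real.exp_pos _).le, ← Real.exp_add, sub_eq_add_neg]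
          _ = ENNReal.ofReal (Real.exp c0) * c := by
              rw [hc]
              exact lintegral_const_mul _ (mexp.comp measurable_neg)
    _ = (∫⁻ ω, ENNReal.ofReal (Real.exp (L t ω)) ∂P) * c :=
        lintegral_mul_const _ (mexp.comp (hL.meas t))
    _ = c := by
        have : (∫⁻ ω, ENNReal.ofReal (Real.exp (L t ω)) ∂P) = 1 := FF_eq_one hL h1 ht
        rw [this, one_mul]
end

section
/- Let (X_t)_{t≥0} be a time-homogeneous Markov process and μ a σ-finite measure on ℝ. Then μ is invariant for X (i.e. ∫ P[X_t(x) ∈ B] μ(dx) = μ(B) for all t ≥ 0 and Borel B) if and only if the 1-resolvent equation holds: ∫_ℝ (∫_0^∞ exp(-t) P[X_t(x) ∈ B] dt) μ(dx) = μ(B) for all Borel B. -/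
open MeasureTheory Filter Set ProbabilityTheory

/-- resolvent characterization of invariant measures (Azéma–Duflo–Revuz).
For a stochastically continuous Markov transition semigroup `p` and a σ-finite measure `μ`,
invariance of `μ` is equivalent to the 1-resolvent equation. -/
theorem invariant_iff_resolvent (p : ℝ → Kernel ℝ ℝ)
    (hMarkov : ∀ t : ℝ, 0 ≤ t → IsMarkovKernel (p t))
    (hzero : ∀ x : ℝ, (p 0) x = Measure.dirac x)
    (hsemigroup : ∀ s t : ℝ, 0 ≤ s → 0 ≤ t → p (s + t) = (p t) ∘ₖ (p s))
    (hcont : ∀ (x : ℝ) (B : Set ℝ), MeasurableSet B →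
      ContinuousOn (fun t : ℝ => ((p t) x B).toReal) (Set.Ici 0))
    (μ : Measure ℝ) [SigmaFinite μ] :
    (∀ t : ℝ, 0 ≤ t → ∀ B : Set ℝ, MeasurableSet B → ∫⁻ x, (p t) x B ∂μ = μ B) ↔
    (∀ B : Set ℝ, MeasurableSet B →
      ∫⁻ x, (∫⁻ t in Set.Ici (0:ℝ), ENNReal.ofReal (Real.exp (-t)) * (p t) x B) ∂μ = μ B) := by
  -- joint measurability
  have hQ : ∀ B : Set ℝ, MeasurableSet B →
      Measurable (fun z : ℝ × ℝ => (p (max z.1 0)) z.2 B) := by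
    intro B hB
    have hmax : Continuous (fun t : ℝ => max t 0) := continuous_id.max continuous_const
    set u : ℝ → ℝ → ℝ := fun t x => ((p (max t 0)) x B).toReal with hu
    have hu_cont : ∀ x, Continuous fun t => u t x := fun x =>
      (hcont x B hB).comp_continuous hmax (fun t => Set.mem_Ici.mpr (le_max_right _ _))
    have hmeas : ∀ t, Measurable (u t) := fun t =>
      ((p (max t 0)).measurable_coe hB).ennreal_toReal
    have hm := measurable_uncurry_of_continuous_of_measurable hu_cont hmeas
    have heq : (fun z : ℝ × ℝ => (p (max z.1 0)) z.2 B)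
        = fun z => ENNReal.ofReal (Function.uncurry u z) := by
      ext z
      haveI := hMarkov (max z.1 0) (le_max_right _ _)
      exact (ENNReal.ofReal_toReal (measure_ne_top _ _)).symm
    rw [heq]
    exact ENNReal.measurable_ofReal.comp hm
  have hexpm : Measurable fun t : ℝ => ENNReal.ofReal (Real.exp (-t)) := by fun_prop
  have hexp1 : ∫⁻ t in Set.Ici (0:ℝ), ENNReal.ofReal (Real.exp (-t)) = 1 := by
    rw [← MeasureTheory.Measure.restrict_congr_set Ioi_ae_eq_Ici]
    have hint : IntegrableOn (fun t : ℝ => Real.exp (-t)) (Ioi 0) := by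
      simpa using exp_neg_integrableOn_Ioi 0 one_pos
    rw [← ofReal_integral_eq_lintegral_ofReal hint
      (Filter.Eventually.of_forall fun t => (Real.exp_pos _).le)]
    rw [integral_exp_neg_Ioi_zero]; simp
  -- ODE uniqueness lemma
  have hODE : ∀ (φ : ℝ → ℝ) (c : ℝ), Continuous φ →
      (∀ s : ℝ, 0 ≤ s → φ s = c - ∫ u in (0:ℝ)..s, φ u) →
      ∀ s : ℝ, 0 ≤ s → φ s = c * Real.exp (-s) := by
    intro φ c hφc hφ
    have hI : ∀ r : ℝ, HasDerivAt (fun w => ∫ u in (0:ℝ)..w, φ u) (φ r) r := fun r =>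
      intervalIntegral.integral_hasDerivAt_right (hφc.intervalIntegrable _ _)
        (hφc.stronglyMeasurable.stronglyMeasurableAtFilter) hφc.continuousAt
    set ψ : ℝ → ℝ := fun w => Real.exp w * (c - ∫ u in (0:ℝ)..w, φ u) with hψ
    have hψd : ∀ r : ℝ, 0 ≤ r → HasDerivAt ψ 0 r := by
      intro r hr
      have h2 := (Real.hasDerivAt_exp r).mul ((hI r).const_sub c)
      have h3 : Real.exp r * (c - ∫ u in (0:ℝ)..r, φ u) + -(Real.exp r * φ r) = 0 := by
        rw [← hφ r hr]; ring
      rw [hψ]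
      exact h2.congr_deriv (by rw [mul_neg]; linarith [h3])
    intro s hs
    have hψc : Continuous ψ :=
      Real.continuous_exp.mul (continuous_const.sub
        (Differentiable.continuous fun w => (hI w).differentiableAt))
    have hconst : ψ s = ψ 0 := by
      have := constant_of_has_deriv_right_zero (f := ψ) (a := 0) (b := s)
        (hψc.continuousOn) (fun r hr => ((hψd r hr.1).hasDerivWithinAt))
      exact this s ⟨hs, le_rfl⟩
    have hψ0 : ψ 0 = c := by simp [hψ]
    have key : Real.exp s * φ s = c := by
      have h := hconst
      simp only [hψ, intervalIntegral.integral_same, Real.exp_zero, sub_zero, one_mul] at h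
      rw [hφ s hs]
      exact h
    have hes : Real.exp s ≠ 0 := (Real.exp_pos s).ne'
    have := key
    field_simp [Real.exp_neg] at this ⊢
    rw [Real.exp_neg, eq_mul_inv_iff_mul_eq₀ hes, mul_comm]; exact this
  constructor
  · -- invariance implies resolvent equation
    intro hinv B hB
    have h1 : ∀ x : ℝ, (∫⁻ t in Ici (0:ℝ), ENNReal.ofReal (Real.exp (-t)) * p t x B)
        = ∫⁻ t in Ici (0:ℝ), ENNReal.ofReal (Real.exp (-t)) * p (max t 0) x B := fun x =>
      setLIntegral_congr_fun measurableSet_Ici (fun t ht => by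
        rw [max_eq_left ht])
    simp_rw [h1]
    have hf : AEMeasurable (Function.uncurry fun (x t : ℝ) =>
        ENNReal.ofReal (Real.exp (-t)) * p (max t 0) x B)
        (μ.prod (volume.restrict (Ici 0))) :=
      ((hexpm.comp measurable_snd).mul ((hQ B hB).comp measurable_swap)).aemeasurable
    rw [lintegral_lintegral_swap hf]
    have h2 : ∀ t ∈ Ici (0:ℝ), (∫⁻ x, ENNReal.ofReal (Real.exp (-t)) * p (max t 0) x B ∂μ)
        = ENNReal.ofReal (Real.exp (-t)) * μ B := by
      intro t ht
      rw [lintegral_const_mul _ ((p (max t 0)).measurable_coe hB), max_eq_left ht,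
        hinv t ht B hB]
    rw [setLIntegral_congr_fun measurableSet_Ici (h2),
      lintegral_mul_const _ (by fun_prop : Measurable fun t : ℝ => ENNReal.ofReal (Real.exp (-t))),
      hexp1, one_mul]
  · -- resolvent equation implies invariance
    intro hres
    -- core identity from the resolvent equation
    have hcore : ∀ h : ℝ → ENNReal, Measurable h →
        ∫⁻ x, (∫⁻ t in Set.Ici (0:ℝ), ENNReal.ofReal (Real.exp (-t)) *
          ∫⁻ y, h y ∂((p (max t 0)) x)) ∂μ = ∫⁻ y, h y ∂μ := by
      set π : Measure (ℝ × ℝ) := μ.prod (volume.restrict (Ici 0)) with hπ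
      set m : ℝ × ℝ → Measure ℝ :=
        fun z => ENNReal.ofReal (Real.exp (-z.2)) • (p (max z.2 0)) z.1 with hm
      have hmc : ∀ (C : Set ℝ), MeasurableSet C → Measurable fun z : ℝ × ℝ => m z C := by
        intro C hC
        simp only [hm, Measure.smul_apply, smul_eq_mul]
        exact ((ENNReal.measurable_ofReal.comp (Real.measurable_exp.comp measurable_neg)).comp
          measurable_snd).mul ((hQ C hC).comp measurable_swap)
      have hmm : Measurable m := Measure.measurable_of_measurable_coe m hmc
      have hν : π.bind m = μ := by
        ext C hC
        rw [Measure.bind_apply hC hmm.aemeasurable, hπ,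
          MeasureTheory.lintegral_prod _ (hmc C hC).aemeasurable]
        have heq : ∀ x : ℝ, ∫⁻ t in Ici (0:ℝ), m (x, t) C
            = ∫⁻ t in Ici (0:ℝ), ENNReal.ofReal (Real.exp (-t)) * (p t) x C := by
          intro x
          refine setLIntegral_congr_fun measurableSet_Ici (fun t ht => ?_)
          simp only [hm, Measure.smul_apply, smul_eq_mul, max_eq_left (Set.mem_Ici.mp ht)]
        simp_rw [heq]
        exact hres C hC
      intro h hh
      conv_rhs => rw [← hν]
      rw [Measure.lintegral_bind hmm.aemeasurable hh.aemeasurable,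
        hπ, MeasureTheory.lintegral_prod (fun z => ∫⁻ y, h y ∂(m z))
          (((Measure.measurable_lintegral hh).comp hmm).aemeasurable)]
      refine lintegral_congr fun x => ?_
      refine setLIntegral_congr_fun measurableSet_Ici (fun t ht => ?_)
      simp only [hm, lintegral_smul_measure, smul_eq_mul]
    have hmain : ∀ B : Set ℝ, MeasurableSet B → μ B ≠ ⊤ →
        ∀ s : ℝ, 0 ≤ s → ∫⁻ x, (p s) x B ∂μ = μ B := by
      intro B hB hBfin
      set g : ℝ → ENNReal := fun u => ∫⁻ x, (p (max u 0)) x B ∂μ with hg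
      have hgmeas : Measurable g := Measurable.lintegral_prod_right (hQ B hB)
      -- translation lemma
      have htrans : ∀ (f : ℝ → ENNReal) (s : ℝ),
          (∫⁻ t in Ici (0:ℝ), f (t + s)) = ∫⁻ u in Ici s, f u := by
        intro f s
        rw [← lintegral_indicator measurableSet_Ici, ← lintegral_indicator measurableSet_Ici]
        rw [← lintegral_add_right_eq_self (fun u => (Ici s).indicator f u) s]
        refine lintegral_congr fun t => ?_
        by_cases ht : 0 ≤ t
        · rw [indicator_of_mem (by exact ht : t ∈ Ici 0),
            indicator_of_mem (by simpa using ht : t + s ∈ Ici s)]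
        · rw [indicator_of_notMem (by exact ht : t ∉ Ici 0),
            indicator_of_notMem (by simpa using ht : t + s ∉ Ici s)]
      -- E2
      have E2 : ∀ s : ℝ, 0 ≤ s →
          g s = ∫⁻ t in Ici (0:ℝ), ENNReal.ofReal (Real.exp (-t)) * g (t + s) := by
        intro s hs
        have h1 := hcore (fun y => (p s) y B) ((p s).measurable_coe hB)
        have h2 : ∀ x : ℝ, (∫⁻ t in Ici (0:ℝ), ENNReal.ofReal (Real.exp (-t)) *
              ∫⁻ y, (p s) y B ∂((p (max t 0)) x))
            = ∫⁻ t in Ici (0:ℝ), ENNReal.ofReal (Real.exp (-t)) * (p (max (t+s) 0)) x B := by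
          intro x
          refine setLIntegral_congr_fun measurableSet_Ici (fun t ht => ?_)
          have hts : (0:ℝ) ≤ t + s := add_nonneg ht hs
          rw [max_eq_left ht, max_eq_left hts, ← Kernel.comp_apply' _ _ _ hB,
            ← hsemigroup t s ht hs, add_comm t s]
        simp_rw [h2] at h1
        have h3 : AEMeasurable (Function.uncurry fun (x t : ℝ) =>
            ENNReal.ofReal (Real.exp (-t)) * (p (max (t+s) 0)) x B)
            (μ.prod (volume.restrict (Ici 0))) := by
          apply Measurable.aemeasurable
          exact (hexpm.comp measurable_snd).mul
            ((hQ B hB).comp ((measurable_snd.add_const s).prodMk measurable_fst))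
        rw [lintegral_lintegral_swap h3] at h1
        have h4 : (∫⁻ t in Ici (0:ℝ), ∫⁻ x, ENNReal.ofReal (Real.exp (-t)) *
            (p (max (t+s) 0)) x B ∂μ) = ∫⁻ t in Ici (0:ℝ),
            ENNReal.ofReal (Real.exp (-t)) * g (t + s) := by
          refine setLIntegral_congr_fun measurableSet_Ici (fun t ht => ?_)
          rw [lintegral_const_mul _ ((p (max (t+s) 0)).measurable_coe hB)]
        rw [h4] at h1
        rw [hg]
        simp only [max_eq_left hs] at h1 ⊢
        exact h1.symm
      -- F
      set F : ℝ → ENNReal := fun s => ∫⁻ u in Ici s, ENNReal.ofReal (Real.exp (-u)) * g u with hF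
      have hFmono : ∀ a b : ℝ, a ≤ b → F b ≤ F a := fun a b hab =>
        lintegral_mono' (Measure.restrict_mono (Ici_subset_Ici.mpr hab) le_rfl) le_rfl
      have hF0 : F 0 = μ B := by
        have h2 : ∀ x : ℝ, (∫⁻ t in Ici (0:ℝ), ENNReal.ofReal (Real.exp (-t)) * (p t) x B)
            = ∫⁻ t in Ici (0:ℝ), ENNReal.ofReal (Real.exp (-t)) * (p (max t 0)) x B := fun x =>
          setLIntegral_congr_fun measurableSet_Ici (fun t ht => by rw [max_eq_left ht])
        have h1 := hres B hB
        simp_rw [h2] at h1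
        have h3 : AEMeasurable (Function.uncurry fun (x t : ℝ) =>
            ENNReal.ofReal (Real.exp (-t)) * (p (max t 0)) x B)
            (μ.prod (volume.restrict (Ici 0))) :=
          ((hexpm.comp measurable_snd).mul ((hQ B hB).comp measurable_swap)).aemeasurable
        rw [lintegral_lintegral_swap h3] at h1
        rw [hF, ← h1]
        refine setLIntegral_congr_fun measurableSet_Ici (fun t ht => ?_)
        rw [lintegral_const_mul _ ((p (max t 0)).measurable_coe hB)]
      have hFfin : ∀ s : ℝ, 0 ≤ s → F s ≠ ⊤ := fun s hs =>
        (lt_of_le_of_lt (hFmono 0 s hs) (hF0 ▸ hBfin.lt_top)).ne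
      -- E3
      have E3 : ∀ s : ℝ, 0 ≤ s → g s = ENNReal.ofReal (Real.exp s) * F s := by
        intro s hs
        have ht := htrans (fun u => ENNReal.ofReal (Real.exp (-u)) * g u) s
        show g s = ENNReal.ofReal (Real.exp s) *
          ∫⁻ u in Ici s, ENNReal.ofReal (Real.exp (-u)) * g u
        rw [E2 s hs, ← ht, ← lintegral_const_mul' (ENNReal.ofReal (Real.exp s)) _
          ENNReal.ofReal_ne_top]
        refine setLIntegral_congr_fun measurableSet_Ici (fun t ht' => ?_)
        rw [← mul_assoc, ← ENNReal.ofReal_mul (Real.exp_nonneg _), ← Real.exp_add]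
        ring_nf
      -- E4
      have E4 : ∀ s : ℝ, 0 ≤ s → F s = ∫⁻ u in Ici s, F u := by
        intro s hs
        refine setLIntegral_congr_fun measurableSet_Ici (fun u hu => ?_)
        have hu0 : (0:ℝ) ≤ u := le_trans hs hu
        rw [E3 u hu0, ← mul_assoc, ← ENNReal.ofReal_mul (Real.exp_nonneg _), ← Real.exp_add,
          neg_add_cancel, Real.exp_zero, ENNReal.ofReal_one, one_mul]
      -- real part
      have hFanti : Antitone F := fun a b hab => hFmono a b hab
      have hFmeas : Measurable F := hFanti.measurable
      set c : ℝ := (μ B).toReal with hc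
      have hc0 : 0 ≤ c := ENNReal.toReal_nonneg
      set φ : ℝ → ℝ := fun u => (F (max u 0)).toReal with hφ
      have hφmeas : Measurable φ :=
        (hFmeas.comp (measurable_id.max measurable_const)).ennreal_toReal
      have hφ0 : φ 0 = c := by simp [hφ, hF0, hc]
      have hφnonneg : ∀ u, 0 ≤ φ u := fun u => ENNReal.toReal_nonneg
      have hφval : ∀ u : ℝ, 0 ≤ u → φ u = (F u).toReal := by
        intro u hu; rw [hφ]; simp only []; rw [max_eq_left hu]
      -- split identity
      have hsplit : ∀ a b : ℝ, 0 ≤ a → a ≤ b → F a = (∫⁻ u in Ico a b, F u) + F b := by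
        intro a b ha hab
        have hdisj : Disjoint (Ico a b) (Ici b) := by
          rw [Set.disjoint_left]; rintro x ⟨_, hxb⟩ hx; exact absurd hx (not_le.mpr hxb)
        calc F a = ∫⁻ u in Ici a, F u := E4 a ha
        _ = (∫⁻ u in Ico a b, F u) + ∫⁻ u in Ici b, F u := by
            rw [← lintegral_union measurableSet_Ici hdisj, Ico_union_Ici_eq_Ici hab]
        _ = (∫⁻ u in Ico a b, F u) + F b := by rw [← E4 b (ha.trans hab)]
      have hIcofin : ∀ a b : ℝ, 0 ≤ a → a ≤ b → (∫⁻ u in Ico a b, F u) ≠ ⊤ := by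
        intro a b ha hab
        intro hcon
        exact hFfin a ha (by rw [hsplit a b ha hab, hcon]; simp)
      have hsplitR : ∀ a b : ℝ, 0 ≤ a → a ≤ b →
          φ a = (∫⁻ u in Ico a b, F u).toReal + φ b := by
        intro a b ha hab
        rw [hφval a ha, hφval b (ha.trans hab), hsplit a b ha hab,
          ENNReal.toReal_add (hIcofin a b ha hab) (hFfin b (ha.trans hab))]
      -- conversion to interval integral
      have hJ : ∀ a b : ℝ, 0 ≤ a → a ≤ b →
          (∫⁻ u in Ico a b, F u).toReal = ∫ u in a..b, φ u := by
        intro a b ha hab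
        have h1 : ∫⁻ u in Ico a b, F u = ∫⁻ u in Ico a b, ENNReal.ofReal (φ u) := by
          refine setLIntegral_congr_fun measurableSet_Ico (fun u hu => ?_)
          rw [hφval u (ha.trans hu.1), ENNReal.ofReal_toReal (hFfin u (ha.trans hu.1))]
        rw [h1, intervalIntegral.integral_of_le hab,
          integral_eq_lintegral_of_nonneg_ae (ae_of_all _ hφnonneg)
            hφmeas.aestronglyMeasurable]
        congr 1
        exact setLIntegral_congr Ico_ae_eq_Ioc
      -- Lipschitz estimate
      have hFle : ∀ u : ℝ, 0 ≤ u → F u ≤ μ B := fun u hu => hF0 ▸ hFmono 0 u hu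
      have hLipIco : ∀ a b : ℝ, 0 ≤ a → a ≤ b → φ a - φ b ≤ c * (b - a) := by
        intro a b ha hab
        have h1 : (∫⁻ u in Ico a b, F u) ≤ μ B * ENNReal.ofReal (b - a) := by
          calc (∫⁻ u in Ico a b, F u) ≤ ∫⁻ _ in Ico a b, μ B :=
            setLIntegral_mono' measurableSet_Ico (fun u hu => hFle u (ha.trans hu.1))
          _ = μ B * ENNReal.ofReal (b - a) := by
            rw [setLIntegral_const, Real.volume_Ico]
        have h2 : (∫⁻ u in Ico a b, F u).toReal ≤ c * (b - a) := by
          have := ENNReal.toReal_mono (ENNReal.mul_ne_top hBfin ENNReal.ofReal_ne_top) h1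
          rwa [ENNReal.toReal_mul, ENNReal.toReal_ofReal (by linarith)] at this
        have := hsplitR a b ha hab
        linarith
      have hLip : ∀ u v : ℝ, |φ u - φ v| ≤ c * |u - v| := by
        have key : ∀ u v : ℝ, max u 0 ≤ max v 0 → |φ u - φ v| ≤ c * |u - v| := by
          intro u v hmax
          have hφuv : φ v ≤ φ u := by
            rw [hφ]
            exact ENNReal.toReal_mono (hFfin _ (le_max_right _ _)) (hFmono _ _ hmax)
          have h1 : φ u - φ v ≤ c * (max v 0 - max u 0) := by
            have h2 : φ u = φ (max u 0) := by rw [hφ]; simp [max_assoc]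
            have h3 : φ v = φ (max v 0) := by rw [hφ]; simp [max_assoc]
            rw [h2, h3]
            exact hLipIco _ _ (le_max_right _ _) hmax
          have h4 : max v 0 - max u 0 ≤ |u - v| := by
            have := abs_max_sub_max_le_abs v u 0
            rw [abs_sub_comm u v]
            calc max v 0 - max u 0 ≤ |max v 0 - max u 0| := le_abs_self _
            _ ≤ |v - u| := this
          rw [abs_of_nonneg (by linarith)]
          calc φ u - φ v ≤ c * (max v 0 - max u 0) := h1
          _ ≤ c * |u - v| := mul_le_mul_of_nonneg_left h4 hc0
        intro u v
        rcases le_total (max u 0) (max v 0) with h | h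
        · exact key u v h
        · rw [abs_sub_comm, abs_sub_comm u v]; exact key v u h
      have hφcont : Continuous φ := by
        have : LipschitzWith (Real.toNNReal c) φ := by
          apply LipschitzWith.of_dist_le_mul
          intro u v
          rw [Real.dist_eq, Real.dist_eq, Real.coe_toNNReal c hc0]
          exact hLip u v
        exact this.continuous
      have hφint : ∀ s : ℝ, 0 ≤ s → φ s = c - ∫ u in (0:ℝ)..s, φ u := by
        intro s hs
        have h := hsplitR 0 s le_rfl hs
        rw [hJ 0 s le_rfl hs, hφ0] at h
        linarith
      have hfinal := hODE φ c hφcont hφint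
      -- conclusion
      intro s hs
      have h1 : ∫⁻ x, (p s) x B ∂μ = g s := by
        rw [hg]; simp only []; rw [max_eq_left hs]
      have h2 : F s = ENNReal.ofReal (c * Real.exp (-s)) := by
        rw [← hfinal s hs, hφval s hs, ENNReal.ofReal_toReal (hFfin s hs)]
      rw [h1, E3 s hs, h2, ← ENNReal.ofReal_mul (Real.exp_nonneg _)]
      have h3 : Real.exp s * (c * Real.exp (-s)) = c := by
        rw [mul_comm c, ← mul_assoc, ← Real.exp_add, add_neg_cancel, Real.exp_zero, one_mul]
      rw [h3, hc, ENNReal.ofReal_toReal hBfin]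
    -- extension to all measurable sets by sigma-finiteness
    intro t ht B hB
    set S : ℕ → Set ℝ := spanningSets μ with hS
    have hmono : Monotone (fun n => B ∩ S n) := fun i j hij =>
      inter_subset_inter_right _ (monotone_spanningSets μ hij)
    have hmeasn : ∀ n, MeasurableSet (B ∩ S n) := fun n =>
      hB.inter (measurableSet_spanningSets μ n)
    have hfinn : ∀ n, μ (B ∩ S n) ≠ ⊤ := fun n =>
      ((measure_mono inter_subset_right).trans_lt (measure_spanningSets_lt_top μ n)).ne
    have hkey : ∀ n, ∫⁻ x, (p t) x (B ∩ S n) ∂μ = μ (B ∩ S n) := fun n =>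
      hmain _ (hmeasn n) (hfinn n) t ht
    have hU : ⋃ n, B ∩ S n = B := by
      rw [← inter_iUnion, hS, iUnion_spanningSets, inter_univ]
    have hxlim : ∀ x : ℝ, (p t) x B = ⨆ n, (p t) x (B ∩ S n) := by
      intro x
      conv_lhs => rw [← hU]
      exact Directed.measure_iUnion hmono.directed_le
    calc ∫⁻ x, (p t) x B ∂μ = ∫⁻ x, ⨆ n, (p t) x (B ∩ S n) ∂μ := lintegral_congr hxlim
    _ = ⨆ n, ∫⁻ x, (p t) x (B ∩ S n) ∂μ :=
        lintegral_iSup (fun n => (p t).measurable_coe (hmeasn n))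
          (fun i j hij x => measure_mono (hmono hij))
    _ = ⨆ n, μ (B ∩ S n) := by simp_rw [hkey]
    _ = μ B := by rw [← Directed.measure_iUnion hmono.directed_le, hU]
end

section
/- Let α be continuous with 0 < α̲ ≤ α ≤ ᾱ < ∞, (L_t)_{t≥0} a Lévy process with E[exp(L_1)]=1, and X_t(x) = L_{T_x(t)} + x. Then for every t > 0 and u ∈ ℝ, the rate λ_u := ∫_ℝ P[sup_{s∈[0,t]} X_s(x) ≥ u] α(x) exp(-x) dx is finite. -/
open MeasureTheory Filter Set


/-- A right-continuous real function is measurable. -/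
lemma measurable_of_rightCont (f : ℝ → ℝ)
    (hf : ∀ t : ℝ, ContinuousWithinAt f (Set.Ici t) t) : Measurable f := by
  have key : ∀ r : ℝ, Tendsto (fun n : ℕ => f (⌈r * 2 ^ n⌉ / 2 ^ n)) atTop (nhds (f r)) := by
    intro r
    have hc : Tendsto (fun n : ℕ => (⌈r * 2 ^ n⌉ : ℝ) / 2 ^ n) atTop (nhdsWithin r (Set.Ici r)) := by
      have h1 : ∀ n : ℕ, r ≤ (⌈r * 2 ^ n⌉ : ℝ) / 2 ^ n := by
        intro n
        rw [le_div_iff₀ (by positivity)]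
        exact Int.le_ceil _
      have h2 : ∀ n : ℕ, (⌈r * 2 ^ n⌉ : ℝ) / 2 ^ n ≤ r + 1 / 2 ^ n := by
        intro n
        rw [div_le_iff₀ (by positivity)]
        have := (Int.ceil_lt_add_one (r * 2 ^ n)).le
        calc ((⌈r * 2 ^ n⌉ : ℝ)) ≤ r * 2 ^ n + 1 := this
          _ = (r + 1 / 2 ^ n) * 2 ^ n := by field_simp
      have hlim : Tendsto (fun n : ℕ => (⌈r * 2 ^ n⌉ : ℝ) / 2 ^ n) atTop (nhds r) := by
        have ht : Tendsto (fun n : ℕ => r + 1 / 2 ^ n) atTop (nhds (r + 0)) := by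
          exact tendsto_const_nhds.add (by
            simpa using tendsto_pow_atTop_nhds_zero_of_lt_one (by norm_num : (0:ℝ) ≤ 1/2) (by norm_num))
        rw [add_zero] at ht
        exact tendsto_of_tendsto_of_tendsto_of_le_of_le tendsto_const_nhds ht h1 h2
      exact tendsto_nhdsWithin_of_tendsto_nhds_of_eventually_within _ hlim
        (Eventually.of_forall fun n => h1 n)
    exact (hf r).tendsto.comp hc
  exact measurable_of_tendsto_metrizable (fun n =>
    (measurable_of_countable (fun k : ℤ => f ((k : ℝ) / 2 ^ n))).comp
      (Int.measurable_ceil.comp (measurable_id.mul_const _)))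
    (tendsto_pi_nhds.mpr key)


/-- A càdlàg real function is bounded below on a compact interval. -/
lemma cadlag_bddBelow (f : ℝ → ℝ) (M : ℝ)
    (hr : ∀ t ∈ Set.Icc (0:ℝ) M, ContinuousWithinAt f (Set.Ici t) t)
    (hl : ∀ t ∈ Set.Ioc (0:ℝ) M, ∃ l : ℝ, Tendsto f (nhdsWithin t (Set.Iio t)) (nhds l)) :
    ∃ m : ℝ, ∀ s ∈ Set.Icc (0:ℝ) M, m ≤ f s := by
  -- local bounds
  have hloc : ∀ t ∈ Set.Icc (0:ℝ) M, ∃ δ > (0:ℝ), ∃ m : ℝ,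
      ∀ s ∈ Set.Icc (0:ℝ) M, dist s t < δ → m ≤ f s := by
    intro t ht
    -- right side
    have h1 : ∀ᶠ s in nhdsWithin t (Set.Ici t), f t - 1 < f s :=
      (hr t ht).eventually (eventually_gt_nhds (by linarith))
    rw [Filter.Eventually, Metric.mem_nhdsWithin_iff] at h1
    obtain ⟨δ₁, hδ₁, H1⟩ := h1
    by_cases ht0 : t = 0
    · refine ⟨δ₁, hδ₁, f t - 1, fun s hs hd => ?_⟩
      exact (H1 ⟨Metric.mem_ball.2 hd, by rw [ht0]; exact hs.1⟩).le
    · have htpos : 0 < t := lt_of_le_of_ne ht.1 (Ne.symm ht0)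
      obtain ⟨l, hlt⟩ := hl t ⟨htpos, ht.2⟩
      have h2 : ∀ᶠ s in nhdsWithin t (Set.Iio t), l - 1 < f s :=
        hlt.eventually (eventually_gt_nhds (by linarith))
      rw [Filter.Eventually, Metric.mem_nhdsWithin_iff] at h2
      obtain ⟨δ₂, hδ₂, H2⟩ := h2
      refine ⟨min δ₁ δ₂, lt_min hδ₁ hδ₂, min (f t - 1) (l - 1), fun s hs hd => ?_⟩
      rcases le_or_gt t s with hc | hc
      · exact le_trans (min_le_left _ _) (H1 ⟨Metric.mem_ball.2 (lt_of_lt_of_le hd (min_le_left _ _)), hc⟩).le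
      · exact le_trans (min_le_right _ _) (H2 ⟨Metric.mem_ball.2 (lt_of_lt_of_le hd (min_le_right _ _)), hc⟩).le
  choose! δ hδ m hm using hloc
  obtain ⟨F, hFmem, hFcov⟩ := (isCompact_Icc (a := (0:ℝ)) (b := M)).elim_nhds_subcover
    (fun t => Metric.ball t (δ t)) (fun t ht => Metric.ball_mem_nhds t (hδ t ht))
  by_cases hFne : F.Nonempty
  · refine ⟨F.inf' hFne m, fun s hs => ?_⟩
    obtain ⟨t, htF, hst⟩ := Set.mem_iUnion₂.1 (hFcov hs)
    exact le_trans (Finset.inf'_le m htF) (hm t (hFmem t htF) s hs (Metric.mem_ball.1 hst))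
  · refine ⟨0, fun s hs => absurd (hFcov hs) ?_⟩
    simp [Finset.not_nonempty_iff_eq_empty.1 hFne]

/-- finiteness of the exceedance rate
`λ_u = ∫ P[sup_{s ∈ [0,t]} X s (x) ≥ u] α (x) e^{-x} dx` for the time-changed process
`X s (x) = L (T x s) + x`. -/
theorem exceedance_rate_finite {Ω : Type*} [MeasurableSpace Ω] (P : Measure Ω)
    [IsProbabilityMeasure P] (L : ℝ → Ω → ℝ) (hL : IsLevy P L)
    (h1 : ∫ ω, Real.exp (L 1 ω) ∂P = 1)
    (α : ℝ → ℝ) (hcont : Continuous α) (a b : ℝ) (ha : 0 < a)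
    (hbound : ∀ z : ℝ, a ≤ α z ∧ α z ≤ b)
    (T : ℝ → ℝ → Ω → ℝ)
    (hT : ∀ x : ℝ, ∀ ω : Ω, ∀ s : ℝ, 0 ≤ s →
      0 ≤ T x s ω ∧ (∫ r in (0:ℝ)..T x s ω, α (L r ω + x)) = s) :
    ∀ t : ℝ, 0 < t → ∀ u : ℝ,
      (∫⁻ x : ℝ, P {ω | ∃ s ∈ Set.Icc (0:ℝ) t, u ≤ L (T x s ω) ω + x}
          * ENNReal.ofReal (α x * Real.exp (-x))) < ⊤ := by
  intro t ht u
  have hb : 0 < b := lt_of_lt_of_le ha (le_trans (hbound 0).1 (hbound 0).2)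
  have hfm0 : Measurable (fun y : ℝ => ENNReal.ofReal (Real.exp y)) :=
    ENNReal.measurable_ofReal.comp Real.measurable_exp
  set M : ℝ := t / a with hMdef
  have hM : 0 < M := div_pos ht ha
  -- path measurability
  have hpath : ∀ ω, Measurable (fun r : ℝ => L (max r 0) ω) := by
    intro ω
    apply measurable_of_rightCont
    intro r
    have h2 : ContinuousWithinAt (fun s => L s ω) (Set.Ici (max r 0)) (max r 0) :=
      hL.cadlag_right ω (max r 0) (Set.mem_Ici.2 (le_max_right _ _))
    have h3 : ContinuousWithinAt (fun s : ℝ => max s 0) (Set.Ici r) r :=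
      ((continuous_id.max continuous_const).continuousAt).continuousWithinAt
    exact ContinuousWithinAt.comp (g := fun s => L s ω) (f := fun s : ℝ => max s 0)
      h2 h3 (fun s hs => Set.mem_Ici.2 (max_le_max hs le_rfl))
  -- time change bound
  have hTM : ∀ x ω s, s ∈ Set.Icc (0:ℝ) t → T x s ω ∈ Set.Icc (0:ℝ) M := by
    intro x ω s hs
    obtain ⟨hT0, hTi⟩ := hT x ω s hs.1
    refine ⟨hT0, ?_⟩
    set r := T x s ω with hrdef
    have hcongr : (∫ ρ in (0:ℝ)..r, α (L ρ ω + x)) = ∫ ρ in (0:ℝ)..r, α (L (max ρ 0) ω + x) := by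
      apply intervalIntegral.integral_congr
      intro ρ hρ
      rw [Set.uIcc_of_le hT0] at hρ
      show α (L ρ ω + x) = α (L (max ρ 0) ω + x)
      rw [max_eq_left hρ.1]
    have hmeas : Measurable (fun ρ : ℝ => α (L (max ρ 0) ω + x)) :=
      hcont.measurable.comp ((hpath ω).add_const x)
    have hint : IntervalIntegrable (fun ρ : ℝ => α (L (max ρ 0) ω + x)) volume 0 r := by
      rw [intervalIntegrable_iff_integrableOn_Ioc_of_le hT0]
      refine Integrable.mono' (g := fun _ => b) (integrableOn_const measure_Ioc_lt_top.ne)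
        hmeas.aestronglyMeasurable (Eventually.of_forall fun ρ => ?_)
      have h1 := (hbound (L (max ρ 0) ω + x)).1
      have h2 := (hbound (L (max ρ 0) ω + x)).2
      rw [Real.norm_eq_abs, abs_le]
      constructor <;> nlinarith
    have hmono : a * r ≤ s := by
      have h0 : (∫ ρ in (0:ℝ)..r, a) ≤ ∫ ρ in (0:ℝ)..r, α (L (max ρ 0) ω + x) :=
        intervalIntegral.integral_mono_on hT0 intervalIntegrable_const hint
          (fun ρ _ => (hbound _).1)
      rw [intervalIntegral.integral_const, smul_eq_mul, sub_zero] at h0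
      rw [← hTi, hcongr]
      linarith
    rw [hMdef, le_div_iff₀ ha]
    nlinarith [hs.2]
  -- dense sequence
  obtain ⟨D, hD, hD0, hDdense⟩ : ∃ D : ℕ → ℝ, (∀ n, D n ∈ Set.Icc (0:ℝ) M) ∧ D 0 = M ∧
      ∀ r ∈ Set.Ico (0:ℝ) M, ∀ δ > (0:ℝ), ∃ n, r < D n ∧ D n < r + δ := by
    refine ⟨fun n => if n = 0 then M else
      min M (max 0 ((Denumerable.ofNat ℚ (n-1) : ℚ) : ℝ)), fun n => ?_, by simp, ?_⟩
    · by_cases hn : n = 0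
      · simp [hn, hM.le]
      · simp only [hn, if_false]
        exact ⟨le_min hM.le (le_max_left _ _), min_le_left _ _⟩
    · intro r hr δ hδ
      have h1 : r < min M (r + δ) := lt_min hr.2 (by linarith)
      obtain ⟨q', hq1, hq2⟩ := exists_rat_btwn h1
      obtain ⟨n, hn⟩ : ∃ n, Denumerable.ofNat ℚ n = q' := ⟨_, Denumerable.ofNat_encode q'⟩
      refine ⟨n + 1, ?_⟩
      have he : Denumerable.ofNat ℚ (n + 1 - 1) = q' := by
        rwa [Nat.add_sub_cancel]
      have hq0 : (0:ℝ) ≤ (q' : ℝ) := le_of_lt (lt_of_le_of_lt hr.1 hq1)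
      have hqM : (q' : ℝ) ≤ M := le_of_lt (lt_of_lt_of_le hq2 (min_le_left _ _))
      have hD : (if n + 1 = 0 then M else
          min M (max 0 ((Denumerable.ofNat ℚ (n + 1 - 1) : ℚ) : ℝ))) = (q' : ℝ) := by
        rw [if_neg (Nat.succ_ne_zero _), he, max_eq_right hq0, min_eq_right hqM]
      beta_reduce
      rw [hD]
      exact ⟨hq1, lt_of_lt_of_le hq2 (min_le_right _ _)⟩
  -- approximation from the right along D
  have happrox : ∀ ω, ∀ r ∈ Set.Icc (0:ℝ) M, ∀ ε > (0:ℝ), ∃ n, |L (D n) ω - L r ω| < ε := by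
    intro ω r hr ε hε
    rcases eq_or_lt_of_le hr.2 with hrM | hrM
    · exact ⟨0, by rw [hD0, hrM]; simpa using hε⟩
    · have hcw : Tendsto (fun s => L s ω) (nhdsWithin r (Set.Ici r)) (nhds (L r ω)) :=
        hL.cadlag_right ω r hr.1
      rw [Metric.tendsto_nhdsWithin_nhds] at hcw
      obtain ⟨δ, hδ, H⟩ := hcw ε hε
      obtain ⟨n, hn1, hn2⟩ := hDdense r ⟨hr.1, hrM⟩ δ hδ
      refine ⟨n, ?_⟩
      have hdist : dist (D n) r < δ := by
        rw [Real.dist_eq, abs_of_pos (by linarith)]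
        linarith
      have := H (le_of_lt hn1) hdist
      rwa [Real.dist_eq] at this
  -- choice of v
  obtain ⟨v, hv⟩ : ∃ v : ℝ, ∀ s ∈ Set.Icc (0:ℝ) M,
      P {ω | L s ω < -v} ≤ 1/2 := by
    set C : ℕ → Set Ω := fun m => ⋃ n, {ω | L (D n) ω ≤ -(m:ℝ)} with hCdef
    have hCmeas : ∀ m, MeasurableSet (C m) := fun m =>
      MeasurableSet.iUnion fun n => measurableSet_le (hL.meas (D n)) measurable_const
    have hCanti : Antitone C := by
      intro m m' hmm'
      apply Set.iUnion_mono
      intro n ω hω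
      simp only [Set.mem_setOf_eq] at hω ⊢
      have hcast : ((m:ℝ)) ≤ (m':ℝ) := Nat.cast_le.2 hmm'
      linarith
    have hCempty : (⋂ m, C m) = ∅ := by
      rw [Set.eq_empty_iff_forall_notMem]
      intro ω hω
      obtain ⟨m, hm⟩ := cadlag_bddBelow (fun s => L s ω) M
        (fun r hr => hL.cadlag_right ω r hr.1)
        (fun r hr => hL.cadlag_left ω r hr.1)
      obtain ⟨m', hm'⟩ := exists_nat_gt (-m)
      have hω' := Set.mem_iInter.1 hω m'
      obtain ⟨n, hn⟩ := Set.mem_iUnion.1 hω'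
      have h1 := hm (D n) (hD n)
      simp only [Set.mem_setOf_eq] at hn
      linarith
    have htend : Tendsto (fun m => P (C m)) atTop (nhds 0) := by
      have h := tendsto_measure_iInter_atTop
        (fun m => (hCmeas m).nullMeasurableSet) hCanti ⟨0, measure_ne_top P _⟩
      rwa [hCempty, measure_empty] at h
    have hev : ∀ᶠ m in (atTop : Filter ℕ), P (C m) < 1/2 :=
      htend.eventually_mem (Iio_mem_nhds (by norm_num))
    obtain ⟨m₁, hm₁⟩ := hev.exists
    refine ⟨(m₁ : ℝ) + 1, fun s hs => ?_⟩
    have hsub : {ω | L s ω < -((m₁:ℝ) + 1)} ⊆ C m₁ := by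
      intro ω hω
      simp only [Set.mem_setOf_eq] at hω
      obtain ⟨n, hn⟩ := happrox ω s hs 1 one_pos
      have := abs_lt.1 hn
      exact Set.mem_iUnion.2 ⟨n, by simp only [Set.mem_setOf_eq]; linarith⟩
    exact le_trans (measure_mono hsub) hm₁.le
  have hv' : ∀ s ∈ Set.Icc (0:ℝ) M,
      (1/2 : ENNReal) ≤ P {ω | -v ≤ L M ω - L s ω} := by
    intro s hs
    have hmeq : P {ω | L M ω - L s ω < -v} = P {ω | L (M - s) ω < -v} := by
      have h := hL.stat_inc s M hs.1 hs.2
      have h1 : P {ω | L M ω - L s ω < -v}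
          = Measure.map (fun ω => L M ω - L s ω) P (Set.Iio (-v)) := by
        rw [Measure.map_apply (f := fun ω => L M ω - L s ω) ((hL.meas M).sub (hL.meas s)) measurableSet_Iio]; rfl
      have h2 : Measure.map (L (M - s)) P (Set.Iio (-v)) = P {ω | L (M - s) ω < -v} := by
        rw [Measure.map_apply (hL.meas _) measurableSet_Iio]; rfl
      rw [h1, h, h2]
    have hle : P {ω | L M ω - L s ω < -v} ≤ 1/2 := by
      rw [hmeq]
      exact hv (M - s) ⟨by linarith [hs.2], by linarith [hs.1]⟩
    have hcompl : {ω | -v ≤ L M ω - L s ω} = {ω | L M ω - L s ω < -v}ᶜ := by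
      ext ω; simp [not_lt]
    rw [hcompl, measure_compl (s := {ω | L M ω - L s ω < -v}) (measurableSet_lt ((hL.meas M).sub (hL.meas s)) measurable_const)
      (measure_ne_top P _)]
    refine ENNReal.le_sub_of_add_le_left (measure_ne_top P _) ?_
    calc P {ω | L M ω - L s ω < -v} + 1/2 ≤ 1/2 + 1/2 := add_le_add hle le_rfl
      _ = 1 := ENNReal.add_halves 1
      _ = P Set.univ := measure_univ.symm
  -- Ottaviani inequality (finite sets)
  have hOtt : ∀ c : ℝ, ∀ F : Finset ℕ,
      P (⋃ n ∈ F, {ω | c < L (D n) ω}) ≤ 2 * P {ω | c - v ≤ L M ω} := by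
    intro c F
    classical
    set A : ℕ → Set Ω := fun n => {ω | c < L (D n) ω} ∩
      ⋂ j, ⋂ (_ : j ∈ F ∧ (D j < D n ∨ (D j = D n ∧ j < n))), {ω | L (D j) ω ≤ c} with hAdef
    set Bv : ℕ → Set Ω := fun n => {ω | -v ≤ L M ω - L (D n) ω} with hBvdef
    have hAmeas : ∀ n, MeasurableSet (A n) := fun n =>
      (measurableSet_lt measurable_const (hL.meas (D n))).inter
        (MeasurableSet.iInter fun j => MeasurableSet.iInter fun _ =>
          measurableSet_le (hL.meas (D j)) measurable_const)
    have hBvmeas : ∀ n, MeasurableSet (Bv n) := fun n =>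
      measurableSet_le measurable_const ((hL.meas M).sub (hL.meas (D n)))
    -- A n is measurable w.r.t. the past up to time D n
    have hAm1 : ∀ n, MeasurableSet[⨆ r ∈ Set.Icc (0:ℝ) (D n),
        MeasurableSpace.comap (L r) inferInstance] (A n) := by
      intro n
      have hpre : ∀ r ∈ Set.Icc (0:ℝ) (D n), ∀ Sb : Set ℝ, MeasurableSet Sb →
          MeasurableSet[⨆ r ∈ Set.Icc (0:ℝ) (D n),
            MeasurableSpace.comap (L r) inferInstance] ((L r) ⁻¹' Sb) := by
        intro r hr Sb hSb
        exact le_iSup₂ (f := fun (r : ℝ) (_ : r ∈ Set.Icc (0:ℝ) (D n)) =>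
          MeasurableSpace.comap (L r) inferInstance) r hr _ ⟨Sb, hSb, rfl⟩
      apply MeasurableSet.inter
      · exact hpre (D n) ⟨(hD n).1, le_rfl⟩ (Set.Ioi c) measurableSet_Ioi
      · refine MeasurableSet.iInter fun j => MeasurableSet.iInter fun hj => ?_
        have hDj : D j ≤ D n := by rcases hj.2 with h | h; exacts [h.le, h.1.le]
        exact hpre (D j) ⟨(hD j).1, hDj⟩ (Set.Iic c) measurableSet_Iic
    -- pairwise disjoint
    have hkey : ∀ j n : ℕ, j ∈ F → (D j < D n ∨ (D j = D n ∧ j < n)) →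
        Disjoint (A j) (A n) := by
      intro j n hjF hlt
      rw [Set.disjoint_left]
      intro ω hωj hωn
      have h1 : c < L (D j) ω := hωj.1
      have h2 : L (D j) ω ≤ c := by
        have h3 := hωn.2
        simp only [Set.mem_iInter] at h3
        exact h3 j ⟨hjF, hlt⟩
      linarith
    have hdisj : (↑F : Set ℕ).PairwiseDisjoint A := by
      intro j hj n hn hjn
      rcases lt_trichotomy (D j) (D n) with h | h | h
      · exact hkey j n hj (Or.inl h)
      · rcases lt_or_gt_of_ne hjn with h' | h'
        · exact hkey j n hj (Or.inr ⟨h, h'⟩)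
        · exact (hkey n j hn (Or.inr ⟨h.symm, h'⟩)).symm
      · exact (hkey n j hn (Or.inl h)).symm
    -- the union of A n covers the union of the events
    have hcover : (⋃ n ∈ F, {ω | c < L (D n) ω}) ⊆ ⋃ n ∈ F, A n := by
      intro ω hω
      obtain ⟨n0, hn0F, hn0⟩ := Set.mem_iUnion₂.1 hω
      set G := F.filter (fun n => c < L (D n) ω) with hGdef
      have hGne : G.Nonempty := ⟨n0, Finset.mem_filter.2 ⟨hn0F, hn0⟩⟩
      obtain ⟨n₁, hn₁G, hmin⟩ := G.exists_min_image (fun n => toLex (D n, n)) hGne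
      refine Set.mem_iUnion₂.2 ⟨n₁, (Finset.mem_filter.1 hn₁G).1,
        (Finset.mem_filter.1 hn₁G).2, ?_⟩
      simp only [Set.mem_iInter]
      intro j hj
      by_contra hc'
      simp only [Set.mem_setOf_eq, not_le] at hc'
      have hjG : j ∈ G := Finset.mem_filter.2 ⟨hj.1, hc'⟩
      have hle := hmin j hjG
      have hlt : toLex (D j, j) < toLex (D n₁, n₁) := Prod.Lex.lt_iff.2 hj.2
      exact absurd hle (not_le.2 hlt)
    -- independence step
    have hAB : ∀ n ∈ F, P (A n) ≤ 2 * P (A n ∩ Bv n) := by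
      intro n _
      have hind := hL.indep_inc (D n) M (hD n).1 (hD n).2
      rw [ProbabilityTheory.Indep_iff] at hind
      have heq := hind (A n) (Bv n) (hAm1 n) ⟨Set.Ici (-v), measurableSet_Ici, rfl⟩
      have h2 : (1/2 : ENNReal) ≤ P (Bv n) := hv' (D n) (hD n)
      have harith : P (A n) ≤ 2 * (P (A n) * P (Bv n)) := by
        calc P (A n) = 2 * (P (A n) * (1/2)) := by
              rw [mul_comm (P (A n)), ← mul_assoc]
              norm_num
              rw [ENNReal.mul_inv_cancel two_ne_zero ENNReal.ofNat_ne_top, one_mul]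
          _ ≤ 2 * (P (A n) * P (Bv n)) := by
              exact mul_le_mul' le_rfl (mul_le_mul' le_rfl h2)
      rw [← heq] at harith
      exact harith
    calc P (⋃ n ∈ F, {ω | c < L (D n) ω}) ≤ P (⋃ n ∈ F, A n) := measure_mono hcover
      _ = ∑ n ∈ F, P (A n) := measure_biUnion_finset hdisj (fun n _ => hAmeas n)
      _ ≤ ∑ n ∈ F, 2 * P (A n ∩ Bv n) := Finset.sum_le_sum hAB
      _ = 2 * ∑ n ∈ F, P (A n ∩ Bv n) := (Finset.mul_sum _ _ _).symm
      _ = 2 * P (⋃ n ∈ F, (A n ∩ Bv n)) := by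
          rw [measure_biUnion_finset
            (hdisj.mono (fun n => Set.inter_subset_left))
            (fun n _ => (hAmeas n).inter (hBvmeas n))]
      _ ≤ 2 * P {ω | c - v ≤ L M ω} := by
          refine mul_le_mul' le_rfl (measure_mono ?_)
          refine Set.iUnion₂_subset fun n _ => ?_
          intro ω hω
          have h1 : c < L (D n) ω := hω.1.1
          have h2 : -v ≤ L M ω - L (D n) ω := hω.2
          simp only [Set.mem_setOf_eq]
          linarith
  -- countable version
  have hOtt' : ∀ c : ℝ, P (⋃ n, {ω | c < L (D n) ω}) ≤ 2 * P {ω | c - v ≤ L M ω} := by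
    intro c
    have hmono : Monotone (fun N => ⋃ n ∈ Finset.range N, {ω | c < L (D n) ω}) := by
      intro N N' hNN'
      exact Set.biUnion_subset_biUnion_left (fun n hn =>
        Finset.mem_range.2 (lt_of_lt_of_le (Finset.mem_range.1 hn) hNN'))
    have hcup : (⋃ n, {ω | c < L (D n) ω})
        = ⋃ N, ⋃ n ∈ Finset.range N, {ω | c < L (D n) ω} := by
      ext ω
      simp only [Set.mem_iUnion, Finset.mem_range]
      constructor
      · rintro ⟨n, hn⟩; exact ⟨n + 1, n, Nat.lt_succ_self n, hn⟩
      · rintro ⟨N, n, _, hn⟩; exact ⟨n, hn⟩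
    rw [hcup]
    have htend := tendsto_measure_iUnion_atTop (μ := P) hmono
    exact le_of_tendsto' htend (fun N => hOtt c (Finset.range N))
  -- event inclusion
  have hincl : ∀ x : ℝ, {ω | ∃ s ∈ Set.Icc (0:ℝ) t, u ≤ L (T x s ω) ω + x}
      ⊆ ⋃ n, {ω | (u - x - 1) < L (D n) ω} := by
    intro x ω hω
    obtain ⟨s, hs, hu⟩ := hω
    have hr := hTM x ω s hs
    obtain ⟨n, hn⟩ := happrox ω (T x s ω) hr 1 one_pos
    have := abs_lt.1 hn
    exact Set.mem_iUnion.2 ⟨n, by simp only [Set.mem_setOf_eq]; linarith⟩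
  -- exponential moments
  set I : ℝ → ENNReal := fun s => ∫⁻ ω, ENNReal.ofReal (Real.exp (L s ω)) ∂P with hIdef
  have hIsplit : ∀ s r : ℝ, 0 ≤ s → s ≤ r → I r = I s * I (r - s) := by
    intro s r hs hsr
    have hexp : ∀ ω, ENNReal.ofReal (Real.exp (L r ω))
        = ENNReal.ofReal (Real.exp (L s ω)) * ENNReal.ofReal (Real.exp (L r ω - L s ω)) := by
      intro ω
      rw [← ENNReal.ofReal_mul (Real.exp_pos _).le, ← Real.exp_add]
      ring_nf
    have hMf : (⨆ ρ ∈ Set.Icc (0:ℝ) s, MeasurableSpace.comap (L ρ) inferInstance)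
        ≤ (inferInstance : MeasurableSpace Ω) :=
      iSup₂_le fun ρ _ => (hL.meas ρ).comap_le
    have hMg : MeasurableSpace.comap (fun ω => L r ω - L s ω) inferInstance
        ≤ (inferInstance : MeasurableSpace Ω) :=
      ((hL.meas r).sub (hL.meas s)).comap_le
    have hmf : Measurable[⨆ ρ ∈ Set.Icc (0:ℝ) s, MeasurableSpace.comap (L ρ) inferInstance]
        (fun ω => ENNReal.ofReal (Real.exp (L s ω))) := by
      refine Measurable.comp (g := fun y : ℝ => ENNReal.ofReal (Real.exp y))
        (f := fun ω => L s ω) hfm0 ?_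
      exact Measurable.of_comap_le (le_iSup₂ (f := fun (ρ : ℝ) (_ : ρ ∈ Set.Icc (0:ℝ) s) =>
        MeasurableSpace.comap (L ρ) inferInstance) s ⟨hs, le_rfl⟩)
    have hmg : Measurable[MeasurableSpace.comap (fun ω => L r ω - L s ω) inferInstance]
        (fun ω => ENNReal.ofReal (Real.exp (L r ω - L s ω))) :=
      Measurable.comp (g := fun y : ℝ => ENNReal.ofReal (Real.exp y))
        (f := fun ω => L r ω - L s ω) hfm0 (Measurable.of_comap_le le_rfl)
    have key := ProbabilityTheory.lintegral_mul_eq_lintegral_mul_lintegral_of_independent_measurableSpace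
      hMf hMg (hL.indep_inc s r hs hsr) hmf hmg
    have hmap : (∫⁻ ω, ENNReal.ofReal (Real.exp (L r ω - L s ω)) ∂P)
        = ∫⁻ ω, ENNReal.ofReal (Real.exp (L (r - s) ω)) ∂P := by
      have h := hL.stat_inc s r hs hsr
      have hfm := hfm0
      calc (∫⁻ ω, ENNReal.ofReal (Real.exp (L r ω - L s ω)) ∂P)
          = ∫⁻ y, ENNReal.ofReal (Real.exp y)
              ∂(Measure.map (fun ω => L r ω - L s ω) P) :=
            (lintegral_map hfm ((hL.meas r).sub (hL.meas s))).symm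
        _ = ∫⁻ y, ENNReal.ofReal (Real.exp y) ∂(Measure.map (L (r - s)) P) := by rw [h]
        _ = ∫⁻ ω, ENNReal.ofReal (Real.exp (L (r - s) ω)) ∂P := lintegral_map hfm (hL.meas _)
    calc I r = ∫⁻ ω, ENNReal.ofReal (Real.exp (L s ω))
          * ENNReal.ofReal (Real.exp (L r ω - L s ω)) ∂P := lintegral_congr hexp
      _ = I s * ∫⁻ ω, ENNReal.ofReal (Real.exp (L r ω - L s ω)) ∂P := key
      _ = I s * I (r - s) := by rw [hmap]
  have hI1 : I 1 = 1 := by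
    have hint : Integrable (fun ω => Real.exp (L 1 ω)) P := by
      by_contra h
      rw [integral_undef h] at h1
      norm_num at h1
    have h := MeasureTheory.ofReal_integral_eq_lintegral_ofReal hint
      (Eventually.of_forall fun ω => (Real.exp_pos _).le)
    show (∫⁻ ω, ENNReal.ofReal (Real.exp (L 1 ω)) ∂P) = 1
    rw [← h, h1, ENNReal.ofReal_one]
  have hIpos : ∀ s : ℝ, 0 < I s := by
    intro s
    rcases (zero_le : 0 ≤ I s).eq_or_lt with h0 | h0
    · exfalso
      have hmeas : Measurable (fun ω => ENNReal.ofReal (Real.exp (L s ω))) :=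
        hfm0.comp (hL.meas s)
      have hae := (lintegral_eq_zero_iff hmeas).1 h0.symm
      have : ∀ᵐ ω ∂P, False := hae.mono fun ω hω => by
        simp only [Pi.zero_apply, ENNReal.ofReal_eq_zero] at hω
        exact absurd hω (not_le.2 (Real.exp_pos _))
      obtain ⟨ω, hω⟩ := this.exists
      exact hω
    · exact h0
  have hInat : ∀ n : ℕ, I n = 1 := by
    intro n
    induction n with
    | zero =>
      show (∫⁻ ω, ENNReal.ofReal (Real.exp (L ((0:ℕ):ℝ) ω)) ∂P) = 1
      simp only [Nat.cast_zero, hL.zero, Real.exp_zero, ENNReal.ofReal_one, lintegral_one,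
        measure_univ]
    | succ k ih =>
      have h := hIsplit (k : ℝ) ((k + 1 : ℕ) : ℝ) (Nat.cast_nonneg k)
        (by push_cast; linarith)
      have h2 : ((k + 1 : ℕ) : ℝ) - (k : ℝ) = 1 := by push_cast; ring
      rw [h2, ih, hI1, one_mul] at h
      exact h
  have hIM : I M < ⊤ := by
    obtain ⟨n, hn⟩ := exists_nat_ge M
    have h := hIsplit M n hM.le hn
    rw [hInat n] at h
    by_contra htop
    push_neg at htop
    have hMtop : I M = ⊤ := top_le_iff.1 htop
    rw [hMtop, ENNReal.top_mul (hIpos ((n : ℝ) - M)).ne'] at h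
    exact absurd h.symm (by simp)
  -- final bound
  have hfin : ∀ x : ℝ, P {ω | ∃ s ∈ Set.Icc (0:ℝ) t, u ≤ L (T x s ω) ω + x}
      ≤ 2 * P {ω | u - x - 1 - v ≤ L M ω} := by
    intro x
    calc P {ω | ∃ s ∈ Set.Icc (0:ℝ) t, u ≤ L (T x s ω) ω + x}
        ≤ P (⋃ n, {ω | (u - x - 1) < L (D n) ω}) := measure_mono (hincl x)
      _ ≤ 2 * P {ω | u - x - 1 - v ≤ L M ω} := hOtt' _
  -- the exponential integral over x
  have hJ : (∫⁻ x : ℝ, P {ω | u - x - 1 - v ≤ L M ω} * ENNReal.ofReal (Real.exp (-x)))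
      = ENNReal.ofReal (Real.exp (1 + v - u)) * I M := by
    classical
    set S : Set (ℝ × Ω) := {p | u - p.1 - 1 - v ≤ L M p.2} with hSdef
    have hSmeas : MeasurableSet S := by
      have hfs : Measurable (fun p : ℝ × Ω => u - p.1 - 1 - v) := by
        exact ((measurable_const.sub measurable_fst).sub measurable_const).sub measurable_const
      exact measurableSet_le hfs ((hL.meas M).comp measurable_snd)
    set G : ℝ × Ω → ENNReal :=
      fun p => S.indicator (fun p => ENNReal.ofReal (Real.exp (-p.1))) p with hGdef
    have hGmeas : Measurable G :=
      Measurable.indicator (hfm0.comp measurable_fst.neg) hSmeas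
    have hsec : ∀ x : ℝ, (∫⁻ ω, G (x, ω) ∂P)
        = P {ω | u - x - 1 - v ≤ L M ω} * ENNReal.ofReal (Real.exp (-x)) := by
      intro x
      have hxev : ∀ ω, G (x, ω) = Set.indicator {ω | u - x - 1 - v ≤ L M ω}
          (fun _ => ENNReal.ofReal (Real.exp (-x))) ω := by
        intro ω
        simp only [hGdef]
        by_cases hc : u - x - 1 - v ≤ L M ω
        · rw [Set.indicator_of_mem (show (x, ω) ∈ S from hc),
            Set.indicator_of_mem (show ω ∈ {ω | u - x - 1 - v ≤ L M ω} from hc)]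
        · rw [Set.indicator_of_notMem (show (x, ω) ∉ S from hc),
            Set.indicator_of_notMem (show ω ∉ {ω | u - x - 1 - v ≤ L M ω} from hc)]
      rw [lintegral_congr hxev,
        lintegral_indicator (measurableSet_le measurable_const (hL.meas M)),
        setLIntegral_const]
      exact mul_comm _ _
    have hx : ∀ ω : Ω, (∫⁻ x : ℝ, G (x, ω))
        = ENNReal.ofReal (Real.exp (1 + v - u)) * ENNReal.ofReal (Real.exp (L M ω)) := by
      intro ω
      have hxev : ∀ x : ℝ, G (x, ω) = Set.indicator (Set.Ici (u - 1 - v - L M ω))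
          (fun x : ℝ => ENNReal.ofReal (Real.exp (-x))) x := by
        intro x
        simp only [hGdef]
        have hiff : (x, ω) ∈ S ↔ x ∈ Set.Ici (u - 1 - v - L M ω) := by
          simp only [hSdef, Set.mem_setOf_eq, Set.mem_Ici]
          constructor <;> intro h <;> linarith
        by_cases hc : (x, ω) ∈ S
        · rw [Set.indicator_of_mem hc, Set.indicator_of_mem (hiff.1 hc)]
        · rw [Set.indicator_of_notMem hc,
            Set.indicator_of_notMem (fun hmem => hc (hiff.2 hmem))]
      rw [lintegral_congr hxev, lintegral_indicator measurableSet_Ici]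
      have hIoi : (volume.restrict (Set.Ici (u - 1 - v - L M ω)))
          = volume.restrict (Set.Ioi (u - 1 - v - L M ω)) :=
        (Measure.restrict_congr_set Ioi_ae_eq_Ici).symm
      rw [hIoi]
      have hInt : IntegrableOn (fun x : ℝ => Real.exp (-x))
          (Set.Ioi (u - 1 - v - L M ω)) := by
        have := exp_neg_integrableOn_Ioi (u - 1 - v - L M ω) (zero_lt_one (α := ℝ))
        simpa using this
      rw [← MeasureTheory.ofReal_integral_eq_lintegral_ofReal hInt
        (Eventually.of_forall fun x => (Real.exp_pos _).le)]
      rw [integral_exp_neg_Ioi]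
      rw [← ENNReal.ofReal_mul (Real.exp_pos _).le, ← Real.exp_add]
      have harg : -(u - 1 - v - L M ω) = 1 + v - u + L M ω := by ring
      rw [harg]
    calc (∫⁻ x : ℝ, P {ω | u - x - 1 - v ≤ L M ω} * ENNReal.ofReal (Real.exp (-x)))
        = ∫⁻ x : ℝ, ∫⁻ ω, G (x, ω) ∂P := lintegral_congr fun x => (hsec x).symm
      _ = ∫⁻ ω, (∫⁻ x : ℝ, G (x, ω)) ∂P :=
          lintegral_lintegral_swap hGmeas.aemeasurable
      _ = ∫⁻ ω, ENNReal.ofReal (Real.exp (1 + v - u))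
            * ENNReal.ofReal (Real.exp (L M ω)) ∂P := lintegral_congr hx
      _ = ENNReal.ofReal (Real.exp (1 + v - u)) * I M :=
          lintegral_const_mul' _ _ ENNReal.ofReal_ne_top
  calc (∫⁻ x : ℝ, P {ω | ∃ s ∈ Set.Icc (0:ℝ) t, u ≤ L (T x s ω) ω + x}
          * ENNReal.ofReal (α x * Real.exp (-x)))
      ≤ ∫⁻ x : ℝ, (2 * ENNReal.ofReal b) *
          (P {ω | u - x - 1 - v ≤ L M ω} * ENNReal.ofReal (Real.exp (-x))) := by
        apply lintegral_mono
        intro x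
        have h1 : ENNReal.ofReal (α x * Real.exp (-x))
            ≤ ENNReal.ofReal b * ENNReal.ofReal (Real.exp (-x)) := by
          rw [← ENNReal.ofReal_mul hb.le]
          exact ENNReal.ofReal_le_ofReal
            (mul_le_mul_of_nonneg_right (hbound x).2 (Real.exp_pos _).le)
        calc P {ω | ∃ s ∈ Set.Icc (0:ℝ) t, u ≤ L (T x s ω) ω + x}
              * ENNReal.ofReal (α x * Real.exp (-x))
            ≤ (2 * P {ω | u - x - 1 - v ≤ L M ω}) *
              (ENNReal.ofReal b * ENNReal.ofReal (Real.exp (-x))) :=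
              mul_le_mul' (hfin x) h1
          _ = (2 * ENNReal.ofReal b) *
              (P {ω | u - x - 1 - v ≤ L M ω} * ENNReal.ofReal (Real.exp (-x))) := by ring
    _ = (2 * ENNReal.ofReal b) *
        (∫⁻ x : ℝ, P {ω | u - x - 1 - v ≤ L M ω} * ENNReal.ofReal (Real.exp (-x))) :=
        lintegral_const_mul' _ _ (by finiteness)
    _ < ⊤ := by
        rw [hJ]
        exact ENNReal.mul_lt_top (by finiteness)
          (ENNReal.mul_lt_top ENNReal.ofReal_lt_top hIM)
end
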